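/- arXiv:1505.06478 — 4 statements merged into one kernel-verified Lean document; each statement's English description precedes it below -/
import Mathlib

section
/- If Ŝ is symmetric with Ŝ(∅)=0, then its Lovasz extension satisfies S(α f + β·1) = |α| S(f) for all α, β ∈ ℝ and all f ∈ ℝ^V. -/
open Finset

/-- Lovasz extension of a set function `Sh` on `V = Fin n`. -/
noncomputable def lovasz {n : ℕ} (Sh : Finset (Fin n) → ℝ) (f : Fin n → ℝ) : ℝ :=
  ∑ i : Fin n,
    f (Tuple.sort f i) *
      (Sh (if (i : ℕ) = 0 then Finset.univ
            else Finset.univ.filter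
              (fun j => f (Tuple.sort f ⟨(i : ℕ) - 1, lt_of_le_of_lt (Nat.sub_le _ _) i.isLt⟩) < f j))
        - Sh (Finset.univ.filter (fun j => f (Tuple.sort f i) < f j)))

/-- cut(A,B) = ∑_{i∈A, j∈B} w_{ij}. -/
noncomputable def cutF {n : ℕ} (W : Matrix (Fin n) (Fin n) ℝ) (A B : Finset (Fin n)) : ℝ :=
  ∑ i ∈ A, ∑ j ∈ B, W i j

/-- Total variation TV(f) = (1/2) ∑_{i,j} w_{ij} |f_i - f_j|. -/
noncomputable def tv {n : ℕ} (W : Matrix (Fin n) (Fin n) ℝ) (f : Fin n → ℝ) : ℝ :=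
  (1 / 2) * ∑ i : Fin n, ∑ j : Fin n, W i j * |f i - f j|

/-- Indicator vector of a set. -/
noncomputable def indic {n : ℕ} (A : Finset (Fin n)) : Fin n → ℝ :=
  fun i => if i ∈ A then 1 else 0

noncomputable def cset {n : ℕ} (f : Fin n → ℝ) (t : ℝ) : Finset (Fin n) :=
  Finset.univ.filter (fun j => t < f j)

noncomputable def gfun {n : ℕ} (f : Fin n → ℝ) (k : ℕ) : ℝ :=
  if h : k < n then f (Tuple.sort f ⟨k, h⟩) else 0

lemma gfun_mono {n : ℕ} (f : Fin n → ℝ) {k l : ℕ} (hkl : k ≤ l) (hl : l < n) :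
    gfun f k ≤ gfun f l := by
  have hk : k < n := lt_of_le_of_lt hkl hl
  rw [gfun, gfun, dif_pos hk, dif_pos hl]
  exact Tuple.monotone_sort f (show (⟨k, hk⟩ : Fin n) ≤ ⟨l, hl⟩ from hkl)

lemma exists_eq_gfun {n : ℕ} (f : Fin n → ℝ) (j : Fin n) :
    ∃ l, l < n ∧ f j = gfun f l := by
  refine ⟨((Tuple.sort f).symm j : Fin n), Fin.isLt _, ?_⟩
  rw [gfun, dif_pos (Fin.isLt _)]
  simp

lemma cset_max_empty {n : ℕ} (f : Fin n → ℝ) (hn : 0 < n) :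
    cset f (gfun f (n - 1)) = ∅ := by
  rw [cset, Finset.filter_eq_empty_iff]
  intro j _
  obtain ⟨l, hl, hj⟩ := exists_eq_gfun f j
  rw [hj]
  exact not_lt.2 (gfun_mono f (by omega) (by omega))

lemma lovasz_eq {n : ℕ} (Sh : Finset (Fin n) → ℝ) (h0 : Sh ∅ = 0)
    (hV : Sh Finset.univ = 0) (f : Fin n → ℝ) :
    lovasz Sh f =
      ∑ k ∈ Finset.range (n - 1),
        (gfun f (k + 1) - gfun f k) * Sh (cset f (gfun f k)) := by
  rcases Nat.eq_zero_or_pos n with h | hn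
  · subst h; simp [lovasz]
  obtain ⟨m, rfl⟩ : ∃ m, n = m + 1 := ⟨n - 1, by omega⟩
  have key : lovasz Sh f =
      ∑ k ∈ Finset.range (m + 1),
        (gfun f k * (if k = 0 then Sh Finset.univ
            else Sh (cset f (gfun f (k - 1)))) - gfun f k * Sh (cset f (gfun f k))) := by
    rw [lovasz, ← Fin.sum_univ_eq_sum_range]
    refine Finset.sum_congr rfl fun i _ => ?_
    have hi : (i : ℕ) < m + 1 := i.isLt
    have e1 : gfun f (i : ℕ) = f (Tuple.sort f i) := by
      rw [gfun, dif_pos hi, Fin.eta]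
    have e2 : gfun f ((i : ℕ) - 1) =
        f (Tuple.sort f ⟨(i : ℕ) - 1, lt_of_le_of_lt (Nat.sub_le _ _) i.isLt⟩) := by
      rw [gfun, dif_pos (lt_of_le_of_lt (Nat.sub_le _ _) i.isLt)]
    simp only [cset, e1, e2, apply_ite Sh]
    ring
  rw [key, Finset.sum_sub_distrib]
  have h1 : ∑ k ∈ Finset.range (m + 1),
      gfun f k * (if k = 0 then Sh Finset.univ else Sh (cset f (gfun f (k - 1)))) =
      ∑ k ∈ Finset.range m, gfun f (k + 1) * Sh (cset f (gfun f k)) := by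
    rw [Finset.sum_range_succ']
    simp [hV]
  have h2 : ∑ k ∈ Finset.range (m + 1), gfun f k * Sh (cset f (gfun f k)) =
      ∑ k ∈ Finset.range m, gfun f k * Sh (cset f (gfun f k)) := by
    rw [Finset.sum_range_succ]
    have : cset f (gfun f m) = ∅ := by
      have := cset_max_empty f (show 0 < m + 1 by omega)
      simpa using this
    rw [this, h0, mul_zero, add_zero]
  rw [h1, h2, ← Finset.sum_sub_distrib]
  simp only [Nat.add_sub_cancel]
  refine Finset.sum_congr rfl fun k _ => by ring


/-- For a symmetric set function, the Lovasz extension satisfies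
S(α f + β 1) = |α| S(f). -/
theorem lovasz_affine {n : ℕ} (Sh : Finset (Fin n) → ℝ) (h0 : Sh ∅ = 0)
    (hV : Sh Finset.univ = 0)
    (hsym : ∀ A : Finset (Fin n), Sh A = Sh Aᶜ)
    (f : Fin n → ℝ) (α β : ℝ) :
    lovasz Sh (fun i => α * f i + β) = |α| * lovasz Sh f := by
  set f' : Fin n → ℝ := fun i => α * f i + β with hf'
  rcases lt_trichotomy α 0 with hα | hα | hα
  · -- α < 0
    have hg' : ∀ k, k < n → gfun f' k = α * gfun f (n - 1 - k) + β := by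
      intro k hk
      have hmono : Monotone (f' ∘ (Fin.revPerm.trans (Tuple.sort f))) := by
        intro x y hxy
        simp only [Function.comp_apply, Equiv.trans_apply, hf', Fin.revPerm_apply]
        have : f (Tuple.sort f y.rev) ≤ f (Tuple.sort f x.rev) :=
          Tuple.monotone_sort f (Fin.rev_le_rev.2 hxy)
        nlinarith
      have := (Tuple.comp_sort_eq_comp_iff_monotone
        (f := f') (σ := Fin.revPerm.trans (Tuple.sort f))).2 hmono
      have hk' : n - 1 - k < n := by omega
      have h2 := congrFun this ⟨k, hk⟩
      simp only [Function.comp_apply, Equiv.trans_apply, Fin.revPerm_apply] at h2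
      rw [gfun, dif_pos hk, ← h2]
      simp only [hf']
      rw [gfun, dif_pos hk']
      have hrev : (⟨k, hk⟩ : Fin n).rev = ⟨n - 1 - k, hk'⟩ := by
        ext
        simp only [Fin.rev]
        omega
      rw [hrev]
    rw [lovasz_eq Sh h0 hV, lovasz_eq Sh h0 hV, abs_of_neg hα, ← Finset.sum_range_reflect,
      Finset.mul_sum]
    refine Finset.sum_congr rfl fun k hk => ?_
    rw [Finset.mem_range] at hk
    have hk1 : k + 1 < n := by omega
    have hm1 : n - 1 - 1 - k + 1 < n := by omega
    have hm0 : n - 1 - 1 - k < n := by omega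
    have e1 : n - 1 - (n - 1 - 1 - k + 1) = k := by omega
    have e2 : n - 1 - (n - 1 - 1 - k) = k + 1 := by omega
    rw [hg' _ hm1, hg' _ hm0, e1, e2]
    have hcs : cset f' (α * gfun f (k + 1) + β) =
        Finset.univ.filter (fun j => f j < gfun f (k + 1)) := by
      rw [cset]
      refine Finset.filter_congr fun j _ => ?_
      simp only [hf', eq_iff_iff]
      constructor <;> intro h <;> nlinarith
    rw [hcs]
    have hmain : Sh (Finset.univ.filter (fun j => f j < gfun f (k + 1))) *
          (gfun f (k + 1) - gfun f k)
        = Sh (cset f (gfun f k)) * (gfun f (k + 1) - gfun f k) := by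
      rcases eq_or_lt_of_le (gfun_mono f (Nat.le_succ k) hk1) with he | hlt
      · rw [← he, sub_self, mul_zero, mul_zero]
      · have hset : Finset.univ.filter (fun j => f j < gfun f (k + 1)) =
            (cset f (gfun f k))ᶜ := by
          rw [cset, Finset.compl_filter]
          refine Finset.filter_congr fun j _ => ?_
          simp only [not_lt, eq_iff_iff]
          obtain ⟨l, hl, hj⟩ := exists_eq_gfun f j
          rw [hj]
          constructor
          · intro h
            by_contra hno
            have hno' : gfun f k < gfun f l := lt_of_not_ge hno
            have hkl : k + 1 ≤ l := by
              by_contra hll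
              exact absurd (gfun_mono f (by omega : l ≤ k) (by omega : k < n))
                (not_le.2 hno')
            exact absurd h (not_lt.2 (gfun_mono f hkl hl))
          · intro h; exact lt_of_le_of_lt h hlt
        rw [hset, ← hsym]
    linear_combination (-α) * hmain
  · subst hα
    rw [lovasz_eq Sh h0 hV]
    have : ∀ k ∈ Finset.range (n - 1),
        (gfun f' (k+1) - gfun f' k) * Sh (cset f' (gfun f' k)) = 0 := by
      intro k hk
      rw [Finset.mem_range] at hk
      have h1 : gfun f' (k+1) = β := by rw [gfun, dif_pos (by omega : k+1 < n)]; simp [hf']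
      have h2 : gfun f' k = β := by rw [gfun, dif_pos (by omega : k < n)]; simp [hf']
      rw [h1, h2, sub_self, zero_mul]
    rw [Finset.sum_congr rfl this]
    simp
  · -- α > 0
    have hg' : ∀ k, k < n → gfun f' k = α * gfun f k + β := by
      intro k hk
      have hmono : Monotone (f' ∘ (Tuple.sort f)) := by
        intro x y hxy
        simp only [Function.comp_apply, hf']
        have h3 := Tuple.monotone_sort f hxy
        simp only [Function.comp_apply] at h3
        nlinarith
      have := (Tuple.comp_sort_eq_comp_iff_monotone
        (f := f') (σ := Tuple.sort f)).2 hmono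
      have h2 := congrFun this ⟨k, hk⟩
      simp only [Function.comp_apply] at h2
      rw [gfun, dif_pos hk, ← h2]
      simp only [hf']
      rw [gfun, dif_pos hk]
    rw [lovasz_eq Sh h0 hV, lovasz_eq Sh h0 hV, Finset.mul_sum]
    refine Finset.sum_congr rfl fun k hk => ?_
    rw [Finset.mem_range] at hk
    have hcs : cset f' (gfun f' k) = cset f (gfun f k) := by
      rw [hg' k (by omega), cset, cset]
      refine Finset.filter_congr fun j _ => ?_
      simp only [hf', eq_iff_iff]
      constructor <;> intro h <;> nlinarith
    rw [hcs, hg' (k+1) (by omega), hg' k (by omega), abs_of_pos hα]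
    ring
end

section
/- For k=2 and a nonnegative symmetric balancing function Ŝ with Ŝ(∅)=0 and Ŝ(C)>0 for ∅≠C⊊V: the optimal value of min over F ∈ ℝ_+^{n×2} with rows in the simplex of ∑_{l=1}^2 TV(F_l)/S(F_l) equals min over partitions (C_1,C_2) of V into two nonempty sets of ∑_{i=1}^2 cut(C_i, V∖C_i)/Ŝ(C_i), given that min_{f ∈ ℝ^V non-constant} TV(f)/S(f) = min_{∅≠C⊊V} cut(C,V∖C)/Ŝ(C) (exact relaxation for a single ratio). -/
/-!
Each column of a relaxed assignment with positive Lovász extension is non-constant (constants have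
zero Lovász extension because `Ŝ(∅) = Ŝ(V) = 0`), so by the single-ratio result each of the two
ratios is at least `c`, and the relaxed objective is at least `2c`. Conversely the indicator columns
`(1_C, 1_{Cᶜ})` of a partition are feasible and reproduce its balanced 2-cut value, and by symmetry
of `W` and `Ŝ` that value is `2 · cut(C, Cᶜ) / Ŝ(C)`, whose minimum is `2c`.
-/

open Finset

lemma Monotone.lt_card_filter_le_iff {n : ℕ} {α : Type*} [LinearOrder α] {g : Fin n → α}
    (hg : Monotone g) (t : α) (j : Fin n) : (j : ℕ) < #{i | g i ≤ t} ↔ g j ≤ t := by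
  constructor
  · intro hj
    by_contra! hlt
    have hsub : ({i | g i ≤ t} : Finset (Fin n)) ⊆ Iio j := fun i hi => by
      simp only [mem_filter, mem_univ, true_and] at hi
      simp only [mem_Iio]
      by_contra! hji
      exact (hlt.trans_le (hg hji)).not_ge hi
    have := card_le_card hsub
    rw [Fin.card_Iio] at this
    omega
  · intro hj
    have hsub : Iic j ⊆ ({i | g i ≤ t} : Finset (Fin n)) := fun i hi => by
      simp only [mem_filter, mem_univ, true_and]
      exact (hg (mem_Iic.mp hi)).trans hj
    have := card_le_card hsub
    rw [Fin.card_Iic] at this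
    omega

lemma indic_nonneg {n : ℕ} (C : Finset (Fin n)) (i : Fin n) : 0 ≤ indic C i := by
  unfold indic; split_ifs <;> norm_num

lemma indic_add_indic_compl {n : ℕ} (C : Finset (Fin n)) (i : Fin n) :
    indic C i + indic Cᶜ i = 1 := by
  by_cases hi : i ∈ C <;> simp [indic, hi]

lemma indic_sort_indic {n : ℕ} (C : Finset (Fin n)) (i : Fin n) :
    indic C (Tuple.sort (indic C) i) = if (i : ℕ) < #Cᶜ then 0 else 1 := by
  have hcard : #{j | indic C (Tuple.sort (indic C) j) ≤ 0} = #Cᶜ :=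
    card_equiv (Tuple.sort (indic C)) fun j => by
      rw [mem_filter]
      by_cases hj : Tuple.sort (indic C) j ∈ C <;> simp [indic, hj]
  have key := (Tuple.monotone_sort (indic C)).lt_card_filter_le_iff 0 i
  simp only [Function.comp_apply, hcard] at key
  split_ifs with hi
  · exact le_antisymm (key.mp hi) (by unfold indic; split_ifs <;> norm_num)
  · have hpos : ¬ indic C (Tuple.sort (indic C) i) ≤ 0 := mt key.mpr hi
    unfold indic at hpos ⊢
    split_ifs at hpos ⊢ <;> simp_all

lemma cutF_eq_sum_indic {n : ℕ} (W : Matrix (Fin n) (Fin n) ℝ) (A B : Finset (Fin n)) :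
    cutF W A B = ∑ i, ∑ j, W i j * (indic A i * indic B j) := by
  simp [cutF, indic, mul_ite]

lemma cutF_comm {n : ℕ} {W : Matrix (Fin n) (Fin n) ℝ} (hW : W.IsSymm)
    (A B : Finset (Fin n)) : cutF W A B = cutF W B A :=
  Finset.sum_comm.trans <| sum_congr rfl fun i _ => sum_congr rfl fun j _ => hW.apply i j

lemma tv_indic {n : ℕ} {W : Matrix (Fin n) (Fin n) ℝ} (hW : W.IsSymm)
    (C : Finset (Fin n)) : tv W (indic C) = cutF W C Cᶜ := by
  have habs : ∀ i j,
      |indic C i - indic C j| = indic C i * indic Cᶜ j + indic Cᶜ i * indic C j := by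
    intro i j; by_cases hi : i ∈ C <;> by_cases hj : j ∈ C <;> simp [indic, hi, hj]
  have hsum : ∑ i, ∑ j, W i j * |indic C i - indic C j| = cutF W C Cᶜ + cutF W Cᶜ C := by
    simp only [cutF_eq_sum_indic, habs, mul_add, sum_add_distrib]
  rw [tv, hsum, cutF_comm hW Cᶜ]
  ring

lemma lovasz_const {n : ℕ} {Sh : Finset (Fin n) → ℝ} (h0 : Sh ∅ = 0) (huniv : Sh univ = 0)
    (a : ℝ) : lovasz Sh (fun _ => a) = 0 := by
  simp [lovasz, h0, huniv, apply_ite Sh]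

lemma lovasz_indic {n : ℕ} {Sh : Finset (Fin n) → ℝ} (h0 : Sh ∅ = 0) {C : Finset (Fin n)}
    (hne : C.Nonempty) (hnu : C ≠ univ) : lovasz Sh (indic C) = Sh C := by
  have hm_pos : 0 < #Cᶜ := card_pos.mpr (by simpa [nonempty_iff_ne_empty] using hnu)
  have hm_lt : #Cᶜ < n := by simpa using (card_compl_lt_iff_nonempty C).mpr hne
  have hpos_set : ({j | 0 < indic C j} : Finset (Fin n)) = C := by
    ext j; rw [mem_filter]; by_cases hj : j ∈ C <;> simp [indic, hj]
  have hgt_one : ({j | 1 < indic C j} : Finset (Fin n)) = ∅ := by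
    ext j; rw [mem_filter]; by_cases hj : j ∈ C <;> simp [indic, hj]
  unfold lovasz
  rw [sum_eq_single_of_mem ⟨#Cᶜ, hm_lt⟩ (mem_univ _)]
  · simp [indic_sort_indic, hpos_set, hgt_one, h0, hm_pos.ne', hm_pos]
  · intro i _ hi
    have hi' : (i : ℕ) ≠ #Cᶜ := fun h => hi (Fin.ext h)
    rcases hi'.lt_or_gt with hlt | hgt
    · simp [indic_sort_indic, hlt]
    · simp [indic_sort_indic, hgt.not_gt, show ¬ (i : ℕ) - 1 < #Cᶜ by omega,
        show (i : ℕ) ≠ 0 by omega]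

section TwoCut

variable {n : ℕ} (W : Matrix (Fin n) (Fin n) ℝ) (Sh : Finset (Fin n) → ℝ)

def relaxedTwoCutValues : Set ℝ :=
  {r | ∃ F : Fin n → Fin 2 → ℝ, (∀ i l, 0 ≤ F i l) ∧ (∀ i, ∑ l, F i l = 1) ∧
    (∀ l, 0 < lovasz Sh (fun i => F i l)) ∧
    r = ∑ l, tv W (fun i => F i l) / lovasz Sh (fun i => F i l)}

def twoCutValues : Set ℝ :=
  {r | ∃ C : Finset (Fin n), C.Nonempty ∧ C ≠ univ ∧
    r = cutF W C Cᶜ / Sh C + cutF W Cᶜ C / Sh Cᶜ}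

variable {W Sh}

lemma twoCutValues_subset_relaxedTwoCutValues (hW : W.IsSymm) (h0 : Sh ∅ = 0)
    (hpos : ∀ C : Finset (Fin n), C.Nonempty → C ≠ univ → 0 < Sh C) :
    twoCutValues W Sh ⊆ relaxedTwoCutValues W Sh := by
  rintro r ⟨C, hne, hnu, rfl⟩
  have hne' : Cᶜ.Nonempty := by simpa [nonempty_iff_ne_empty] using hnu
  have hnu' : Cᶜ ≠ univ := by simpa [← nonempty_iff_ne_empty] using hne
  refine ⟨fun i l => ![indic C, indic Cᶜ] l i, fun i l => ?_, fun i => ?_, fun l => ?_, ?_⟩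
  · fin_cases l <;> exact indic_nonneg _ i
  · simpa using indic_add_indic_compl C i
  · fin_cases l
    · simpa [lovasz_indic h0 hne hnu] using hpos C hne hnu
    · simpa [lovasz_indic h0 hne' hnu'] using hpos Cᶜ hne' hnu'
  · simp [lovasz_indic h0 hne hnu, lovasz_indic h0 hne' hnu', tv_indic hW]

lemma le_tv_div_lovasz {c : ℝ} (h0 : Sh ∅ = 0) (huniv : Sh univ = 0)
    (hsingle : c ∈ lowerBounds {r : ℝ | ∃ f : Fin n → ℝ,
      (¬ ∃ a : ℝ, ∀ i, f i = a) ∧ r = tv W f / lovasz Sh f})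
    {f : Fin n → ℝ} (hf : 0 < lovasz Sh f) : c ≤ tv W f / lovasz Sh f := by
  refine hsingle ⟨f, ?_, rfl⟩
  rintro ⟨a, ha⟩
  rw [funext ha, lovasz_const h0 huniv] at hf
  exact hf.false

lemma two_mul_mem_lowerBounds_relaxedTwoCutValues {c : ℝ} (h0 : Sh ∅ = 0)
    (huniv : Sh univ = 0)
    (hsingle : c ∈ lowerBounds {r : ℝ | ∃ f : Fin n → ℝ,
      (¬ ∃ a : ℝ, ∀ i, f i = a) ∧ r = tv W f / lovasz Sh f}) :
    2 * c ∈ lowerBounds (relaxedTwoCutValues W Sh) := by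
  rintro r ⟨F, -, -, hF, rfl⟩
  have h := fun l => le_tv_div_lovasz h0 huniv hsingle (hF l)
  rw [Fin.sum_univ_two]
  linarith [h 0, h 1]

lemma isLeast_twoCutValues {c : ℝ} (hW : W.IsSymm) (hsym : ∀ A, Sh A = Sh Aᶜ)
    (hcut : IsLeast {r : ℝ | ∃ C : Finset (Fin n),
      C.Nonempty ∧ C ≠ univ ∧ r = cutF W C Cᶜ / Sh C} c) :
    IsLeast (twoCutValues W Sh) (2 * c) := by
  have hratio_compl (C : Finset (Fin n)) : cutF W Cᶜ C / Sh Cᶜ = cutF W C Cᶜ / Sh C := by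
    rw [cutF_comm hW, ← hsym]
  obtain ⟨C₀, hne, hnu, rfl⟩ := hcut.1
  refine ⟨⟨C₀, hne, hnu, by rw [hratio_compl]; ring⟩, ?_⟩
  rintro r ⟨C, hCne, hCnu, rfl⟩
  rw [hratio_compl]
  linarith [hcut.2 ⟨C, hCne, hCnu, rfl⟩]

end TwoCut

theorem exact_relaxation_k2_general {n : ℕ} (W : Matrix (Fin n) (Fin n) ℝ)
    (hWsym : ∀ i j, W i j = W j i)
    (Sh : Finset (Fin n) → ℝ) (h0 : Sh ∅ = 0)
    (hsym : ∀ A : Finset (Fin n), Sh A = Sh Aᶜ)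
    (hpos : ∀ C : Finset (Fin n), C.Nonempty → C ≠ Finset.univ → 0 < Sh C)
    (c : ℝ)
    (hsingle : IsLeast {r : ℝ | ∃ f : Fin n → ℝ,
        (¬ ∃ a : ℝ, ∀ i, f i = a) ∧ r = tv W f / lovasz Sh f} c)
    (hcut : IsLeast {r : ℝ | ∃ C : Finset (Fin n),
        C.Nonempty ∧ C ≠ Finset.univ ∧ r = cutF W C Cᶜ / Sh C} c) :
    ∃ p : ℝ,
      IsLeast {r : ℝ | ∃ F : Fin n → Fin 2 → ℝ,
          (∀ i l, 0 ≤ F i l) ∧ (∀ i, ∑ l, F i l = 1) ∧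
          (∀ l, 0 < lovasz Sh (fun i => F i l)) ∧
          r = ∑ l, tv W (fun i => F i l) / lovasz Sh (fun i => F i l)} p ∧
      IsLeast {r : ℝ | ∃ C : Finset (Fin n), C.Nonempty ∧ C ≠ Finset.univ ∧
          r = cutF W C Cᶜ / Sh C + cutF W Cᶜ C / Sh Cᶜ} p := by
  have hW : W.IsSymm := Matrix.IsSymm.ext fun i j => hWsym j i
  have huniv : Sh univ = 0 := by rw [← compl_empty, ← hsym, h0]
  have hdiscrete : IsLeast (twoCutValues W Sh) (2 * c) := isLeast_twoCutValues hW hsym hcut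
  exact ⟨2 * c, ⟨twoCutValues_subset_relaxedTwoCutValues hW h0 hpos hdiscrete.1,
    two_mul_mem_lowerBounds_relaxedTwoCutValues h0 huniv hsingle.2⟩, hdiscrete⟩

/-- Exact continuous relaxation of the balanced 2-cut problem: the optimal value
of the simplex-constrained continuous problem for k = 2 equals the optimal
balanced 2-cut, given the exact single-ratio relaxation result. -/
theorem exact_relaxation_k2 {n : ℕ} (W : Matrix (Fin n) (Fin n) ℝ)
    (hW : ∀ i j, 0 ≤ W i j) (hWsym : ∀ i j, W i j = W j i)
    (Sh : Finset (Fin n) → ℝ) (h0 : Sh ∅ = 0) (hnn : ∀ A, 0 ≤ Sh A)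
    (hsym : ∀ A : Finset (Fin n), Sh A = Sh Aᶜ)
    (hpos : ∀ C : Finset (Fin n), C.Nonempty → C ≠ Finset.univ → 0 < Sh C)
    (c : ℝ)
    (hsingle : IsLeast {r : ℝ | ∃ f : Fin n → ℝ,
        (¬ ∃ a : ℝ, ∀ i, f i = a) ∧ r = tv W f / lovasz Sh f} c)
    (hcut : IsLeast {r : ℝ | ∃ C : Finset (Fin n),
        C.Nonempty ∧ C ≠ Finset.univ ∧ r = cutF W C Cᶜ / Sh C} c) :
    ∃ p : ℝ,
      IsLeast {r : ℝ | ∃ F : Fin n → Fin 2 → ℝ,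
          (∀ i l, 0 ≤ F i l) ∧ (∀ i, ∑ l, F i l = 1) ∧
          (∀ l, 0 < lovasz Sh (fun i => F i l)) ∧
          r = ∑ l, tv W (fun i => F i l) / lovasz Sh (fun i => F i l)} p ∧
      IsLeast {r : ℝ | ∃ C : Finset (Fin n), C.Nonempty ∧ C ≠ Finset.univ ∧
          r = cutF W C Cᶜ / Sh C + cutF W Cᶜ C / Sh Cᶜ} p :=
  exact_relaxation_k2_general W hWsym Sh h0 hsym hpos c hsingle hcut
end

section
/- Monotonic descent: let (F^{t+1}, δ^{+}, δ^{−}) be feasible for the inner problem, i.e., TV(F_l^{t+1}) ≤ λ_l^t ⟨s_l^t, F_l^{t+1}⟩ + m δ_l^+ − M δ_l^− with δ^± ≥ 0, where λ_l^t = TV(F_l^t)/S(F_l^t), s_l^t ∈ ∂S(F_l^t), ⟨s_l^t, F_l^t⟩ = S(F_l^t), S is convex, and S(F_l^{t+1}) satisfies m ≤ S(F_l^{t+1}) ≤ M. Then TV(F_l^{t+1})/S(F_l^{t+1}) ≤ λ_l^t + δ_l^+ − δ_l^−, and hence ∑_l TV(F_l^{t+1})/S(F_l^{t+1}) ≤ ∑_l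 λ_l^t + ∑_l (δ_l^+ − δ_l^−). -/
open Finset

/-- Per-ratio descent estimate: feasibility for the inner problem plus the
subgradient inequality and the bounds m ≤ S(F_l^{t+1}) ≤ M yield
TV(F_l^{t+1})/S(F_l^{t+1}) ≤ λ_l^t + δ_l^+ − δ_l^−, and hence the summed
inequality. -/
theorem per_ratio_descent {n k : ℕ}
    (TV S : (Fin n → ℝ) → ℝ) (hTV : ∀ f, 0 ≤ TV f)
    (m M : ℝ) (hm : 0 < m) (hM : 0 < M)
    (Ft Ft1 : Fin k → Fin n → ℝ) (s : Fin k → Fin n → ℝ)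
    (lam : Fin k → ℝ) (hlam : ∀ l, lam l = TV (Ft l) / S (Ft l))
    (hSt : ∀ l, 0 < S (Ft l))
    (hgrad : ∀ l, ∑ i, s l i * Ft l i = S (Ft l))
    (hsub : ∀ l, ∑ i, s l i * Ft1 l i ≤ S (Ft1 l))
    (hlo : ∀ l, m ≤ S (Ft1 l)) (hhi : ∀ l, S (Ft1 l) ≤ M)
    (dp dm : Fin k → ℝ) (hdp : ∀ l, 0 ≤ dp l) (hdm : ∀ l, 0 ≤ dm l)
    (hfeas : ∀ l, TV (Ft1 l) ≤ lam l * (∑ i, s l i * Ft1 l i) + m * dp l - M * dm l) :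
    (∀ l, TV (Ft1 l) / S (Ft1 l) ≤ lam l + dp l - dm l) ∧
    (∑ l, TV (Ft1 l) / S (Ft1 l)) ≤ (∑ l, lam l) + ∑ l, (dp l - dm l) := by
  have key : ∀ l, TV (Ft1 l) / S (Ft1 l) ≤ lam l + dp l - dm l := by
    intro l
    have hS1 : 0 < S (Ft1 l) := lt_of_lt_of_le hm (hlo l)
    have hlamnn : 0 ≤ lam l := by
      rw [hlam l]; exact div_nonneg (hTV _) (hSt l).le
    have h1 : lam l * (∑ i, s l i * Ft1 l i) ≤ lam l * S (Ft1 l) :=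
      mul_le_mul_of_nonneg_left (hsub l) hlamnn
    have h2 : m * dp l ≤ S (Ft1 l) * dp l :=
      mul_le_mul_of_nonneg_right (hlo l) (hdp l)
    have h3 : S (Ft1 l) * dm l ≤ M * dm l :=
      mul_le_mul_of_nonneg_right (hhi l) (hdm l)
    have : TV (Ft1 l) ≤ S (Ft1 l) * (lam l + dp l - dm l) := by
      have := hfeas l
      nlinarith
    rw [div_le_iff₀ hS1]
    linarith [this]
  refine ⟨key, ?_⟩
  rw [← Finset.sum_add_distrib]
  exact Finset.sum_le_sum fun l _ => by linarith [key l]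
end

section
/- If the optimal value of the inner problem min ∑_l (δ_l^+ − δ_l^−) over feasible (F, δ^+, δ^−) is strictly negative, then the new iterate satisfies strict descent: ∑_{l=1}^k TV(F_l^{t+1})/S(F_l^{t+1}) < ∑_{l=1}^k TV(F_l^t)/S(F_l^t); and the point (F^t, δ^+=0, δ^−=0) is always feasible for the inner problem, so the optimal value is ≤ 0. -/
open Finset

/-- Feasibility for the inner convex problem of the descent method. -/
def InnerFeasible {n k : ℕ} (TV : (Fin n → ℝ) → ℝ)
    (lam : Fin k → ℝ) (s : Fin k → Fin n → ℝ) (m M : ℝ)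
    (L : Finset (Fin n × Fin k))
    (F : Fin k → Fin n → ℝ) (dp dm : Fin k → ℝ) : Prop :=
  (∀ l, TV (F l) ≤ lam l * (∑ i, s l i * F l i) + m * dp l - M * dm l) ∧
  (∀ l, 0 ≤ dp l) ∧ (∀ l, 0 ≤ dm l) ∧
  (∀ i l, 0 ≤ F l i) ∧ (∀ i, ∑ l, F l i = 1) ∧
  (∀ p ∈ L, F p.2 p.1 = 1) ∧
  (∀ l, m ≤ ∑ i, s l i * F l i)

/-!
At `F^t` the linearised constraint holds with equality and zero slack, since
`λ_l ⟨s_l, F_l^t⟩ = λ_l S(F_l^t) = TV(F_l^t)`. For any feasible `(F, δ⁺, δ⁻)`,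
the subgradient inequality `⟨s_l, F_l⟩ ≤ S(F_l)` together with `m ≤ S(F_l) ≤ M`
turns the constraint into `TV(F_l) ≤ S(F_l) (λ_l + δ_l⁺ - δ_l⁻)`, so
`TV(F_l)/S(F_l) ≤ λ_l + δ_l⁺ - δ_l⁻`; summing over `l`, a negative total slack
gives strict descent.
-/

lemma div_le_add_sub_of_le_mul_add_sub {tv lam a S m M dp dm : ℝ}
    (h : tv ≤ lam * a + m * dp - M * dm) (ha : a ≤ S) (hlam : 0 ≤ lam)
    (hm : 0 < m) (hmS : m ≤ S) (hSM : S ≤ M) (hdp : 0 ≤ dp) (hdm : 0 ≤ dm) :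
    tv / S ≤ lam + (dp - dm) := by
  rw [div_le_iff₀ (hm.trans_le hmS)]
  have hlamS : lam * a ≤ lam * S := mul_le_mul_of_nonneg_left ha hlam
  have hdpS : m * dp ≤ S * dp := mul_le_mul_of_nonneg_right hmS hdp
  have hdmS : S * dm ≤ M * dm := mul_le_mul_of_nonneg_right hSM hdm
  linarith

section InnerProblem

variable {n k : ℕ} {TV S : (Fin n → ℝ) → ℝ} {lam : Fin k → ℝ}
  {s : Fin k → Fin n → ℝ} {m M : ℝ} {L : Finset (Fin n × Fin k)}

lemma innerFeasible_iterate {Ft : Fin k → Fin n → ℝ} (hm : 0 < m)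
    (hlam : ∀ l, lam l = TV (Ft l) / S (Ft l))
    (hgrad : ∀ l, ∑ i, s l i * Ft l i = S (Ft l)) (hStm : ∀ l, m ≤ S (Ft l))
    (hFtpos : ∀ i l, 0 ≤ Ft l i) (hFtsum : ∀ i, ∑ l, Ft l i = 1)
    (hFtlab : ∀ p ∈ L, Ft p.2 p.1 = 1) :
    InnerFeasible TV lam s m M L Ft (fun _ => 0) (fun _ => 0) := by
  refine ⟨fun l => ?_, fun _ => le_rfl, fun _ => le_rfl, hFtpos, hFtsum, hFtlab,
    fun l => hgrad l ▸ hStm l⟩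
  rw [hgrad l, hlam l, div_mul_cancel₀ _ (hm.trans_le (hStm l)).ne']
  simp

lemma InnerFeasible.sum_div_le {F : Fin k → Fin n → ℝ} {dp dm : Fin k → ℝ}
    (hF : InnerFeasible TV lam s m M L F dp dm) (hm : 0 < m) (hlam : ∀ l, 0 ≤ lam l)
    (hsub : ∀ l f, ∑ i, s l i * f i ≤ S f) (hbound : ∀ l, m ≤ S (F l) ∧ S (F l) ≤ M) :
    ∑ l, TV (F l) / S (F l) ≤ ∑ l, lam l + ∑ l, (dp l - dm l) := by
  rw [← sum_add_distrib]
  exact sum_le_sum fun l _ =>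
    div_le_add_sub_of_le_mul_add_sub (hF.1 l) (hsub l (F l)) (hlam l) hm
      (hbound l).1 (hbound l).2 (hF.2.1 l) (hF.2.2.1 l)

end InnerProblem

theorem inner_problem_descent_general {n k : ℕ}
    (TV S : (Fin n → ℝ) → ℝ) (hTV : ∀ f, 0 ≤ TV f)
    (m M : ℝ) (hm : 0 < m)
    (L : Finset (Fin n × Fin k))
    (Ft : Fin k → Fin n → ℝ) (s : Fin k → Fin n → ℝ)
    (lam : Fin k → ℝ) (hlam : ∀ l, lam l = TV (Ft l) / S (Ft l))
    (hgrad : ∀ l, ∑ i, s l i * Ft l i = S (Ft l))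
    (hsub : ∀ l f, ∑ i, s l i * f i ≤ S f)
    (hStm : ∀ l, m ≤ S (Ft l))
    (hFtpos : ∀ i l, 0 ≤ Ft l i) (hFtsum : ∀ i, ∑ l, Ft l i = 1)
    (hFtlab : ∀ p ∈ L, Ft p.2 p.1 = 1)
    (hbound : ∀ F dp dm, InnerFeasible TV lam s m M L F dp dm →
      ∀ l : Fin k, m ≤ S (F l) ∧ S (F l) ≤ M) :
    InnerFeasible TV lam s m M L Ft (fun _ => 0) (fun _ => 0) ∧
    (∀ F dp dm, InnerFeasible TV lam s m M L F dp dm →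
      (∑ l, (dp l - dm l)) < 0 →
      (∑ l, TV (F l) / S (F l)) < ∑ l, TV (Ft l) / S (Ft l)) := by
  refine ⟨innerFeasible_iterate hm hlam hgrad hStm hFtpos hFtsum hFtlab,
    fun F dp dm hF hneg => ?_⟩
  have hlam_nonneg : ∀ l, 0 ≤ lam l := fun l =>
    hlam l ▸ div_nonneg (hTV _) (hm.le.trans (hStm l))
  calc ∑ l, TV (F l) / S (F l)
      ≤ ∑ l, lam l + ∑ l, (dp l - dm l) :=
        hF.sum_div_le hm hlam_nonneg hsub (hbound F dp dm hF)
    _ < ∑ l, lam l := by linarith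
    _ = ∑ l, TV (Ft l) / S (Ft l) := sum_congr rfl fun l _ => hlam l

/-- If the optimal value of the inner problem is strictly negative, the new
iterate strictly decreases the sum of ratios; moreover the previous iterate
(F^t, 0, 0) is feasible for the inner problem (so the optimal value is ≤ 0). -/
theorem inner_problem_descent {n k : ℕ}
    (TV S : (Fin n → ℝ) → ℝ) (hTV : ∀ f, 0 ≤ TV f)
    (m M : ℝ) (hm : 0 < m) (hM : 0 < M)
    (L : Finset (Fin n × Fin k))
    (Ft : Fin k → Fin n → ℝ) (s : Fin k → Fin n → ℝ)
    (lam : Fin k → ℝ) (hlam : ∀ l, lam l = TV (Ft l) / S (Ft l))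
    (hgrad : ∀ l, ∑ i, s l i * Ft l i = S (Ft l))
    (hsub : ∀ l f, ∑ i, s l i * f i ≤ S f)
    (hStm : ∀ l, m ≤ S (Ft l))
    (hFtpos : ∀ i l, 0 ≤ Ft l i) (hFtsum : ∀ i, ∑ l, Ft l i = 1)
    (hFtlab : ∀ p ∈ L, Ft p.2 p.1 = 1)
    (hbound : ∀ F dp dm, InnerFeasible TV lam s m M L F dp dm →
      ∀ l : Fin k, m ≤ S (F l) ∧ S (F l) ≤ M) :
    InnerFeasible TV lam s m M L Ft (fun _ => 0) (fun _ => 0) ∧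
    (∀ F dp dm, InnerFeasible TV lam s m M L F dp dm →
      (∑ l, (dp l - dm l)) < 0 →
      (∑ l, TV (F l) / S (F l)) < ∑ l, TV (Ft l) / S (Ft l)) :=
  inner_problem_descent_general TV S hTV m M hm L Ft s lam hlam hgrad hsub hStm hFtpos hFtsum hFtlab
    hbound
end
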